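/- The number of runs of the Burrows–Wheeler transform of T is at most the number of suffix-tree edges of T from maximal-repeat nodes to non-maximal-repeat nodes: r_T ≤ |F^r_T|. -/

import Mathlib

/-! Basic definitions: strings are lists of naturals; the separator `#` is `0`;
the alphabet is `Σ = [1..σ]`. Occurrences are taken in the circular version of `T`. -/

noncomputable section
open Classical

/-- `T` is a string over the alphabet `[1..σ]` followed by the separator `# = 0`
(so `#` occurs in `T` exactly once, at the last position). -/
def Wellformed (σ : ℕ) (T : List ℕ) : Prop :=
  ∃ S : List ℕ, T = S ++ [0] ∧ ∀ c ∈ S, 1 ≤ c ∧ c ≤ σ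

/-- The rotation of `T` starting at position `i`. -/
def rot (T : List ℕ) (i : ℕ) : List ℕ := T.drop i ++ T.take i

/-- `W` occurs at position `i` of the circular version of `T`. -/
def CircOccAt (T W : List ℕ) (i : ℕ) : Prop :=
  ∀ j < W.length, W.getD j 0 = T.getD ((i + j) % T.length) 0

/-- `𝒫_T(W)`: the set of starting positions of occurrences of `W` in the circular
version of `T`. -/
def Pset (T W : List ℕ) : Finset ℕ :=
  (Finset.range T.length).filter (fun i => CircOccAt T W i)

/-- `W` occurs in the circular version of `T`. -/
def OccursCirc (T W : List ℕ) : Prop := (Pset T W).Nonempty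

/-- `Σ^ℓ_T(W)`: the set of characters `a` such that `aW` occurs in circular `T`. -/
def SigmaL (T W : List ℕ) : Finset ℕ :=
  T.toFinset.filter (fun a => OccursCirc T (a :: W))

/-- `Σ^r_T(W)`: the set of characters `b` such that `Wb` occurs in circular `T`. -/
def SigmaR (T W : List ℕ) : Finset ℕ :=
  T.toFinset.filter (fun b => OccursCirc T (W ++ [b]))

/-- `W` is left-maximal in `T`. -/
def LeftMaximal (T W : List ℕ) : Prop := 1 < (SigmaL T W).card

/-- `W` is right-maximal in `T`. -/
def RightMaximal (T W : List ℕ) : Prop := 1 < (SigmaR T W).card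

/-- The (finite) collection of substrings of the circular version of `T`. -/
def circSubstrings (T : List ℕ) : Finset (List ℕ) :=
  ((Finset.range T.length) ×ˢ (Finset.range (T.length + 1))).image
    (fun p => (rot T p.1).take p.2)

/-- `ℳ_T`: the set of nonempty maximal repeats of `T`, i.e. repeats that are both
left-maximal and right-maximal.  (Every maximal repeat occurs in circular `T` and has
length at most `|T|`, so it belongs to `circSubstrings T`.) -/
def MaxRepeats (T : List ℕ) : Finset (List ℕ) :=
  (circSubstrings T).filter
    (fun W => W ≠ [] ∧ 1 < (Pset T W).card ∧ LeftMaximal T W ∧ RightMaximal T W)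

/-- Strict lexicographic comparison of strings (a proper prefix is smaller). -/
def lexLt : List ℕ → List ℕ → Bool
  | [], [] => false
  | [], _ :: _ => true
  | _ :: _, [] => false
  | a :: A, b :: B => decide (a < b) || (a == b && lexLt A B)

/-- Non-strict lexicographic comparison. -/
def lexLe (A B : List ℕ) : Bool := !(lexLt B A)

/-- The Burrows–Wheeler transform of `T`: the `i`-th character of `BWT T` is the last
character of the lexicographically `i`-th rotation of `T`. -/
def BWT (T : List ℕ) : List ℕ :=
  (((List.range T.length).map (rot T)).mergeSort lexLe).map (fun R => R.getLast!)

/-- The number of runs of a string, i.e. the number of maximal intervals on which all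
characters are equal. -/
def numRuns : List ℕ → ℕ
  | [] => 0
  | [_] => 1
  | a :: b :: l => (if a = b then 0 else 1) + numRuns (b :: l)


noncomputable section
open Classical

/-- `ℳ^r_T`: the set of rightmost maximal repeats of `T`: maximal repeats `W` such that
no string `WV` with `V` nonempty is left-maximal in `T`. -/
def RightmostMaxRepeats (T : List ℕ) : Finset (List ℕ) :=
  (MaxRepeats T).filter (fun W => ∀ V : List ℕ, V ≠ [] → ¬ LeftMaximal T (W ++ V))

/-- `Y` is the shortest right-maximal extension of `X` in `T`: the shortest
right-maximal string of `T` having `X` as a prefix. -/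
def ShortestRightMaxExt (T X Y : List ℕ) : Prop :=
  X <+: Y ∧ RightMaximal T Y ∧
    ∀ Z : List ℕ, X <+: Z → RightMaximal T Z → Y.length ≤ Z.length

/-- `ℱ^r_T`: pairs `(V, b)` with `V ∈ ℳ_T ∪ {ε}` and `b ∈ Σ^r_T(V)` such that either
`Vb` occurs exactly once in circular `T`, or the shortest right-maximal extension of
`Vb` is not a maximal repeat of `T`.  These pairs correspond to the suffix-tree edges
of `T` from maximal-repeat nodes to non-maximal-repeat nodes. -/
def Fr (T : List ℕ) : Finset (List ℕ × ℕ) :=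
  ((insert ([] : List ℕ) (MaxRepeats T)) ×ˢ T.toFinset).filter
    (fun p => p.2 ∈ SigmaR T p.1 ∧
      ((Pset T (p.1 ++ [p.2])).card = 1 ∨
        ∀ Y : List ℕ, ShortestRightMaxExt T (p.1 ++ [p.2]) Y → Y ∉ MaxRepeats T))

/-- `e_T`: the number of right extensions of maximal repeats of `T`, i.e. the number of
pairs `(V, b)` with `V ∈ ℳ_T ∪ {ε}` and `b ∈ Σ^r_T(V)`.  This equals the number of
arcs of the CDAWG of `T`. -/
def eCount (T : List ℕ) : ℕ :=
  ∑ V ∈ insert ([] : List ℕ) (MaxRepeats T), (SigmaR T V).card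

/-- The next LZ77 factor, to be placed at position `k` of `T`, may be `F` if `F` is a
single character (every single character of `T` has a source among the `σ+1` distinct
characters virtually preceding `T`), or if `F` has an occurrence in `T` starting at a
position `j` strictly before `k`. -/
def LZsource (T : List ℕ) (k : ℕ) (F : List ℕ) : Prop :=
  F.length = 1 ∨ ∃ j, j < k ∧ F <+: T.drop j

/-- `fs` is the LZ77 factorization of `T` (greedy: each factor is the longest prefix of
the remaining suffix admitting a source). -/
def IsLZ77 (T : List ℕ) (fs : List (List ℕ)) : Prop :=
  fs.flatten = T ∧ (∀ F ∈ fs, F ≠ []) ∧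
    ∀ i, (h : i < fs.length) →
      LZsource T ((fs.take i).flatten).length (fs.get ⟨i, h⟩) ∧
      ∀ F' : List ℕ, F' <+: T.drop ((fs.take i).flatten).length →
        (fs.get ⟨i, h⟩).length < F'.length →
          ¬ LZsource T ((fs.take i).flatten).length F'

/-- `N_T(X)`: the number of rotations of `T` lexicographically smaller than `X`. -/
def Nrank (T X : List ℕ) : ℕ :=
  ((List.range T.length).filter (fun i => lexLt (rot T i) X)).length

/-- The string `a b a² b a³ b ⋯ aˣ b #`. -/
def Tx (a b x : ℕ) : List ℕ :=
  (((List.range x).map (fun i => List.replicate (i + 1) a ++ [b])).flatten) ++ [0]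

end

/-! Sort the rotations of `T` and send each rotation `R` to the suffix-tree edge `(V, b)`
leaving the deepest ancestor of the leaf `R` that is labelled by `ε` or a maximal repeat; this
edge lies in `ℱ^r_T`. If the rotations at sorted positions `i < j` give the same edge, every
rotation in between begins with `Vb`. The shortest right-maximal extension of `Vb` occurs
wherever `Vb` does and is not a maximal repeat, so it is not left-maximal and all these
rotations are preceded by the same character: the BWT has no run boundary at `j`. Hence the
map from run starts to `ℱ^r_T` is injective. -/

open List

theorem lexLt_iff_lt : ∀ A B : List ℕ, lexLt A B = true ↔ A < B
  | [], [] => by simp [lexLt]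
  | [], _ :: _ => by simp [lexLt]
  | _ :: _, [] => by simp [lexLt]
  | a :: A, b :: B => by simp [lexLt, cons_lt_cons_iff, lexLt_iff_lt A B]

theorem lexLe_iff_le (A B : List ℕ) : lexLe A B = true ↔ A ≤ B := by
  rw [lexLe, Bool.not_eq_true', ← Bool.not_eq_true, lexLt_iff_lt, not_lt]

theorem List.IsPrefix.of_le_of_le {α : Type*} [LinearOrder α] :
    ∀ {P X Y Z : List α}, P <+: X → P <+: Z → X ≤ Y → Y ≤ Z → P <+: Y
  | [], _, _, _, _, _, _, _ => nil_prefix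
  | _ :: _, _, [], _, ⟨_, rfl⟩, _, hXY, _ => absurd (nil_lt_cons _ _) (not_lt.mpr hXY)
  | p :: P, _, q :: Y, _, ⟨X, rfl⟩, ⟨Z, rfl⟩, hXY, hYZ => by
    have hXY' : List.le (p :: (P ++ X)) (q :: Y) := not_lt.mpr hXY
    have hYZ' : List.le (q :: Y) (p :: (P ++ Z)) := not_lt.mpr hYZ
    obtain rfl : q = p :=
      le_antisymm (left_le_left_of_cons_le_cons hYZ') (left_le_left_of_cons_le_cons hXY')
    exact cons_prefix_cons.mpr ⟨rfl, IsPrefix.of_le_of_le (prefix_append P X) (prefix_append P Z)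
      (not_lt.mp (le_of_cons_le_cons hXY')) (not_lt.mp (le_of_cons_le_cons hYZ'))⟩

theorem List.take_append_getD {l : List ℕ} {i : ℕ} (h : i < l.length) :
    l.take i ++ [l.getD i 0] = l.take (i + 1) := by
  rw [getD_eq_getElem _ _ h, take_concat_get']

theorem List.prefix_iff_getD {W R : List ℕ} :
    W <+: R ↔ W.length ≤ R.length ∧ ∀ j < W.length, W.getD j 0 = R.getD j 0 := by
  rw [prefix_iff_getElem]
  refine ⟨fun ⟨hle, h⟩ => ⟨hle, fun j hj => ?_⟩,
    fun ⟨hle, h⟩ => ⟨hle, fun j hj => ?_⟩⟩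
  · rw [getD_eq_getElem _ _ hj, getD_eq_getElem _ _ (by omega), h j hj]
  · have := h j hj
    rwa [getD_eq_getElem _ _ hj, getD_eq_getElem _ _ (by omega)] at this

theorem length_rot (T : List ℕ) (i : ℕ) : (rot T i).length = T.length := by
  simp only [rot, length_append, length_drop, length_take]; omega

theorem getD_rot {T : List ℕ} {i j : ℕ} (hi : i < T.length) (hj : j < T.length) :
    (rot T i).getD j 0 = T.getD ((i + j) % T.length) 0 := by
  rw [getD_eq_getElem _ _ (by rwa [length_rot]),
    getD_eq_getElem _ _ (Nat.mod_lt _ (by omega))]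
  simp only [rot]
  by_cases h : j < T.length - i
  · rw [getElem_append_left (by rw [length_drop]; omega), getElem_drop]
    simp only [Nat.mod_eq_of_lt (show i + j < T.length by omega)]
  · rw [getElem_append_right (by rw [length_drop]; omega), getElem_take]
    congr 1
    rw [Nat.mod_eq_sub_mod (by omega), Nat.mod_eq_of_lt (by omega), length_drop]
    omega

theorem getLast!_rot {T : List ℕ} {p : ℕ} (hp : p < T.length) :
    (rot T p).getLast! = T.getD ((p + T.length - 1) % T.length) 0 := by
  have hlt : T.length - 1 < (rot T p).length := by rw [length_rot]; omega
  apply getLast!_of_getLast?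
  rw [getLast?_eq_getElem?, length_rot, getElem?_eq_getElem hlt, ← getD_eq_getElem _ 0 hlt,
    getD_rot hp (by omega), Nat.add_sub_assoc (by omega)]

theorem mem_Pset {T W : List ℕ} {i : ℕ} :
    i ∈ Pset T W ↔ i < T.length ∧ CircOccAt T W i := by
  simp [Pset]

theorem circOccAt_iff_prefix_rot {T W : List ℕ} {i : ℕ} (hi : i < T.length)
    (hW : W.length ≤ T.length) : CircOccAt T W i ↔ W <+: rot T i := by
  rw [prefix_iff_getD, length_rot]
  refine ⟨fun h => ⟨hW, fun j hj => ?_⟩, fun h j hj => ?_⟩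
  · rw [h j hj, getD_rot hi (by omega)]
  · rw [h.2 j hj, getD_rot hi (by omega)]

theorem CircOccAt.of_prefix {T W W' : List ℕ} {i : ℕ} (hp : W' <+: W)
    (h : CircOccAt T W i) : CircOccAt T W' i := fun j hj => by
  rw [(prefix_iff_getD.mp hp).2 j hj]
  exact h j (by have := hp.length_le; omega)

theorem circOccAt_append_singleton {T W : List ℕ} {b i : ℕ} :
    CircOccAt T (W ++ [b]) i ↔
      CircOccAt T W i ∧ b = T.getD ((i + W.length) % T.length) 0 := by
  constructor
  · intro h
    refine ⟨CircOccAt.of_prefix (prefix_append _ _) h, ?_⟩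
    simpa using h W.length (by simp)
  · rintro ⟨h, rfl⟩ j hj
    rw [length_append, length_singleton] at hj
    rcases Nat.lt_or_ge j W.length with hj' | hj'
    · rw [getD_append _ _ _ _ hj']
      exact h j hj'
    · obtain rfl : j = W.length := by omega
      simp

theorem CircOccAt.cons_getLast!_rot {T W : List ℕ} {p : ℕ} (hp : p < T.length)
    (h : CircOccAt T W p) :
    CircOccAt T ((rot T p).getLast! :: W) ((p + T.length - 1) % T.length) := by
  rw [getLast!_rot hp]
  rintro (_ | j) hj
  · simp
  · rw [getD_cons_succ, h j (by simpa using hj), Nat.mod_add_mod,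
      show p + T.length - 1 + (j + 1) = p + j + T.length by omega, Nat.add_mod_right]

theorem mem_SigmaR {T W : List ℕ} {b : ℕ} :
    b ∈ SigmaR T W ↔ b ∈ T ∧ OccursCirc T (W ++ [b]) := by
  simp [SigmaR]

theorem mem_SigmaL {T W : List ℕ} {a : ℕ} :
    a ∈ SigmaL T W ↔ a ∈ T ∧ OccursCirc T (a :: W) := by
  simp [SigmaL]

theorem mem_of_circOccAt_append_singleton {T W : List ℕ} {b i : ℕ}
    (hn : 0 < T.length) (h : CircOccAt T (W ++ [b]) i) : b ∈ T := by
  rw [(circOccAt_append_singleton.mp h).2, getD_eq_getElem _ _ (Nat.mod_lt _ hn)]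
  exact getElem_mem _

theorem mem_SigmaR_of_circOccAt {T W : List ℕ} {b i : ℕ} (hi : i < T.length)
    (h : CircOccAt T (W ++ [b]) i) : b ∈ SigmaR T W :=
  mem_SigmaR.mpr ⟨mem_of_circOccAt_append_singleton (by omega) h, i, mem_Pset.mpr ⟨hi, h⟩⟩

theorem rightMaximal_of_circOccAt {T W : List ℕ} {b₁ b₂ i₁ i₂ : ℕ}
    (hi₁ : i₁ < T.length) (hi₂ : i₂ < T.length)
    (h₁ : CircOccAt T (W ++ [b₁]) i₁) (h₂ : CircOccAt T (W ++ [b₂]) i₂)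
    (hne : b₁ ≠ b₂) : RightMaximal T W :=
  Finset.one_lt_card.mpr
    ⟨b₁, mem_SigmaR_of_circOccAt hi₁ h₁, b₂, mem_SigmaR_of_circOccAt hi₂ h₂, hne⟩

theorem eq_of_not_rightMaximal {T W : List ℕ} {b₁ b₂ i₁ i₂ : ℕ}
    (hW : ¬ RightMaximal T W) (hi₁ : i₁ < T.length) (hi₂ : i₂ < T.length)
    (h₁ : CircOccAt T (W ++ [b₁]) i₁) (h₂ : CircOccAt T (W ++ [b₂]) i₂) : b₁ = b₂ :=
  not_imp_comm.mp (rightMaximal_of_circOccAt hi₁ hi₂ h₁ h₂) hW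

theorem getLast!_rot_eq_of_not_leftMaximal {T W : List ℕ} {p q : ℕ}
    (hW : ¬ LeftMaximal T W) (hp : p < T.length) (hq : q < T.length)
    (h₁ : CircOccAt T W p) (h₂ : CircOccAt T W q) :
    (rot T p).getLast! = (rot T q).getLast! := by
  have hmem : ∀ {i}, i < T.length → CircOccAt T W i → (rot T i).getLast! ∈ SigmaL T W := by
    intro i hi h
    have hocc := h.cons_getLast!_rot hi
    refine mem_SigmaL.mpr ⟨?_, _, mem_Pset.mpr ⟨Nat.mod_lt _ (by omega), hocc⟩⟩
    rw [getLast!_rot hi, getD_eq_getElem _ _ (Nat.mod_lt _ (by omega))]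
    exact getElem_mem _
  exact Finset.card_le_one.mp (not_lt.mp hW) _ (hmem hp h₁) _ (hmem hq h₂)

theorem RightMaximal.exists_circOccAt {T Y : List ℕ} (h : RightMaximal T Y) :
    ∃ i < T.length, CircOccAt T Y i := by
  obtain ⟨b, hb⟩ := Finset.card_pos.mp (zero_lt_one.trans h)
  obtain ⟨-, i, hi⟩ := mem_SigmaR.mp hb
  rw [mem_Pset] at hi
  exact ⟨i, hi.1, CircOccAt.of_prefix (prefix_append _ _) hi.2⟩

namespace Wellformed

variable {σ : ℕ} {T : List ℕ}

theorem length_pos (hT : Wellformed σ T) : 0 < T.length := by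
  obtain ⟨S, rfl, -⟩ := hT; simp

theorem getD_eq_zero_iff (hT : Wellformed σ T) {k : ℕ} (hk : k < T.length) :
    T.getD k 0 = 0 ↔ k = T.length - 1 := by
  obtain ⟨S, rfl, hS⟩ := hT
  simp only [length_append, length_singleton] at hk ⊢
  rw [getD_eq_getElem _ _ (by simpa using hk)]
  rcases Nat.lt_or_ge k S.length with hkS | hkS
  · rw [getElem_append_left hkS]
    have := hS _ (getElem_mem hkS)
    omega
  · rw [getElem_append_right hkS, getElem_singleton]
    omega

/-- The unique separator pins down the start of any occurrence covering a full period. -/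
theorem eq_of_circOccAt (hT : Wellformed σ T) {W : List ℕ} (hW : T.length ≤ W.length)
    {i₁ i₂ : ℕ} (hi₁ : i₁ < T.length) (hi₂ : i₂ < T.length)
    (h₁ : CircOccAt T W i₁) (h₂ : CircOccAt T W i₂) : i₁ = i₂ := by
  set n := T.length
  have hj : n - 1 - i₁ < W.length := by omega
  have e₁ : (i₁ + (n - 1 - i₁)) % n = n - 1 := by rw [Nat.mod_eq_of_lt (by omega)]; omega
  have hzero : T.getD ((i₂ + (n - 1 - i₁)) % n) 0 = 0 := by
    rw [← h₂ _ hj, h₁ _ hj, e₁, hT.getD_eq_zero_iff (by omega)]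
  rw [hT.getD_eq_zero_iff (Nat.mod_lt _ (by omega))] at hzero
  have := Nat.ModEq.add_right_cancel' (n - 1 - i₁) (hzero.trans e₁.symm)
  rwa [Nat.ModEq, Nat.mod_eq_of_lt hi₁, Nat.mod_eq_of_lt hi₂, eq_comm] at this

theorem length_lt_of_rightMaximal (hT : Wellformed σ T) {Y : List ℕ}
    (h : RightMaximal T Y) : Y.length < T.length := by
  by_contra! hge
  obtain ⟨b₁, hb₁, b₂, hb₂, hne⟩ := Finset.one_lt_card.mp h
  obtain ⟨-, i₁, hi₁⟩ := mem_SigmaR.mp hb₁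
  obtain ⟨-, i₂, hi₂⟩ := mem_SigmaR.mp hb₂
  rw [mem_Pset] at hi₁ hi₂
  obtain rfl : i₁ = i₂ := hT.eq_of_circOccAt hge hi₁.1 hi₂.1
    (CircOccAt.of_prefix (prefix_append _ _) hi₁.2)
    (CircOccAt.of_prefix (prefix_append _ _) hi₂.2)
  exact hne ((circOccAt_append_singleton.mp hi₁.2).2.trans
    (circOccAt_append_singleton.mp hi₂.2).2.symm)

end Wellformed

/-- No proper prefix of `Y` extending `X` is right-maximal, so each next character is forced. -/
theorem ShortestRightMaxExt.circOccAt {T X Y : List ℕ} (hY : ShortestRightMaxExt T X Y)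
    {i : ℕ} (hi : i < T.length) (hX : CircOccAt T X i) : CircOccAt T Y i := by
  obtain ⟨hXY, hYr, hmin⟩ := hY
  obtain ⟨q, hq, hYq⟩ := hYr.exists_circOccAt
  have hXYl := hXY.length_le
  suffices ∀ m, X.length + m ≤ Y.length → CircOccAt T (Y.take (X.length + m)) i by
    simpa [Nat.add_sub_cancel' hXYl] using this (Y.length - X.length) (by omega)
  intro m
  induction m with
  | zero => intro _; rwa [add_zero, ← prefix_iff_eq_take.mp hXY]
  | succ m ih =>
    intro hm
    have hk : X.length + m < Y.length := by omega
    have hZ : ¬ RightMaximal T (Y.take (X.length + m)) := fun h =>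
      absurd (hmin _ (prefix_take_iff.mpr ⟨hXY, by omega⟩) h) (by rw [length_take]; omega)
    have hYq' : CircOccAt T (Y.take (X.length + m) ++ [Y.getD (X.length + m) 0]) q := by
      rw [take_append_getD hk]; exact CircOccAt.of_prefix (take_prefix _ _) hYq
    have hYi : CircOccAt T (Y.take (X.length + m) ++
        [T.getD ((i + (X.length + m)) % T.length) 0]) i :=
      circOccAt_append_singleton.mpr ⟨ih (by omega), by rw [length_take, min_eq_left hk.le]⟩
    rwa [← add_assoc, ← take_append_getD hk, eq_of_not_rightMaximal hZ hq hi hYq' hYi]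

theorem exists_shortestRightMaxExt {T X : List ℕ}
    (h : ∃ Z : List ℕ, X <+: Z ∧ RightMaximal T Z) :
    ∃ Y : List ℕ, ShortestRightMaxExt T X Y := by
  have hex : ∃ m, ∃ Z : List ℕ, Z.length = m ∧ X <+: Z ∧ RightMaximal T Z :=
    let ⟨Z, hZ⟩ := h; ⟨_, Z, rfl, hZ⟩
  obtain ⟨Y, hYlen, hXY, hY⟩ := Nat.find_spec hex
  exact ⟨Y, hXY, hY, fun Z hXZ hZ => hYlen ▸ Nat.find_min' hex ⟨Z, rfl, hXZ, hZ⟩⟩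

/-- The longest common prefix of two distinct rotations is right-maximal. -/
theorem exists_rightMaximal_of_prefix_rot {T X : List ℕ} {p q : ℕ}
    (hp : p < T.length) (hq : q < T.length) (hXp : X <+: rot T p) (hXq : X <+: rot T q)
    (hne : rot T p ≠ rot T q) : ∃ Z : List ℕ, X <+: Z ∧ RightMaximal T Z := by
  set R₁ := rot T p
  set R₂ := rot T q
  have hlen₁ : R₁.length = T.length := length_rot T p
  have hlen₂ : R₂.length = T.length := length_rot T q
  have hex : ∃ d, R₁.getD d 0 ≠ R₂.getD d 0 := by
    by_contra! h
    refine hne (ext_getElem (by omega) fun j h₁ h₂ => ?_)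
    have := h j
    rwa [getD_eq_getElem _ _ h₁, getD_eq_getElem _ _ h₂] at this
  set d := Nat.find hex
  have hd : R₁.getD d 0 ≠ R₂.getD d 0 := Nat.find_spec hex
  have hdn : d < T.length := by
    by_contra! h
    exact hd (by simp [getD_eq_getElem?_getD, hlen₁, hlen₂, h])
  have hXd : X.length ≤ d := by
    by_contra! h
    exact hd (by rw [← (prefix_iff_getD.mp hXp).2 d h, ← (prefix_iff_getD.mp hXq).2 d h])
  have htake : R₂.take d = R₁.take d := by
    refine ext_getElem (by rw [length_take, length_take]; omega) fun j h₁ h₂ => ?_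
    have hj : j < d := by rw [length_take] at h₁; omega
    have := Nat.find_min hex hj
    rw [not_ne_iff, getD_eq_getElem _ _ (by omega), getD_eq_getElem _ _ (by omega)] at this
    simp [this]
  have hocc : ∀ {i}, i < T.length → CircOccAt T ((rot T i).take (d + 1)) i := fun hi =>
    (circOccAt_iff_prefix_rot hi (by rw [length_take, length_rot]; omega)).mpr (take_prefix _ _)
  refine ⟨R₁.take d, prefix_take_iff.mpr ⟨hXp, hXd⟩,
    rightMaximal_of_circOccAt hp hq (b₁ := R₁.getD d 0) (b₂ := R₂.getD d 0) ?_ ?_ hd⟩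
  · rw [take_append_getD (by omega)]; exact hocc hp
  · rw [← htake, take_append_getD (by omega)]; exact hocc hq

theorem mem_circSubstrings_of_circOccAt {T W : List ℕ} {i : ℕ} (hi : i < T.length)
    (hW : W.length ≤ T.length) (h : CircOccAt T W i) : W ∈ circSubstrings T :=
  Finset.mem_image.mpr ⟨(i, W.length),
    Finset.mem_product.mpr ⟨Finset.mem_range.mpr hi, Finset.mem_range.mpr (by omega)⟩,
    (prefix_iff_eq_take.mp ((circOccAt_iff_prefix_rot hi hW).mp h)).symm⟩

/-- The shortest right-maximal extension `Y` of `X` occurs wherever `X` does, so a second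
preceding character would make `Y` a maximal repeat. -/
theorem Wellformed.getLast!_rot_eq_of_prefix {σ : ℕ} {T X : List ℕ} (hT : Wellformed σ T)
    (hX : X ≠ []) {p q : ℕ} (hp : p < T.length) (hq : q < T.length)
    (hXp : X <+: rot T p) (hXq : X <+: rot T q)
    (hXM : ∀ Y : List ℕ, ShortestRightMaxExt T X Y → Y ∉ MaxRepeats T) :
    (rot T p).getLast! = (rot T q).getLast! := by
  rcases eq_or_ne (rot T p) (rot T q) with heq | hne
  · rw [heq]
  obtain ⟨Y, hY⟩ :=
    exists_shortestRightMaxExt (exists_rightMaximal_of_prefix_rot hp hq hXp hXq hne)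
  have hXn : X.length ≤ T.length := hXp.length_le.trans (length_rot T p).le
  have hYp := hY.circOccAt hp ((circOccAt_iff_prefix_rot hp hXn).mpr hXp)
  have hYq := hY.circOccAt hq ((circOccAt_iff_prefix_rot hq hXn).mpr hXq)
  refine getLast!_rot_eq_of_not_leftMaximal (fun hYl => hXM Y hY ?_) hp hq hYp hYq
  refine Finset.mem_filter.mpr ⟨mem_circSubstrings_of_circOccAt hp
    (hT.length_lt_of_rightMaximal hY.2.1).le hYp, ?_, ?_, hYl, hY.2.1⟩
  · rintro rfl
    exact hX (prefix_nil.mp hY.1)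
  · exact Finset.one_lt_card.mpr ⟨p, mem_Pset.mpr ⟨hp, hYp⟩, q, mem_Pset.mpr ⟨hq, hYq⟩,
      fun h => hne (h ▸ rfl)⟩

/-- `R.take (maxRepeatDepth T R)` is the deepest ancestor of the leaf `R` in the suffix tree
of `T` labelled by `ε` or by a maximal repeat, and `maxRepeatEdge T R` is the suffix-tree
edge leaving it towards `R`. -/
def maxRepeatDepth (T R : List ℕ) : ℕ :=
  Nat.findGreatest (fun k => R.take k ∈ insert ([] : List ℕ) (MaxRepeats T)) R.length

def maxRepeatEdge (T R : List ℕ) : List ℕ × ℕ :=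
  (R.take (maxRepeatDepth T R), R.getD (maxRepeatDepth T R) 0)

theorem take_maxRepeatDepth_mem (T R : List ℕ) :
    R.take (maxRepeatDepth T R) ∈ insert ([] : List ℕ) (MaxRepeats T) :=
  Nat.findGreatest_spec (P := fun k => R.take k ∈ insert ([] : List ℕ) (MaxRepeats T))
    (Nat.zero_le _) (by simp)

theorem Wellformed.maxRepeatDepth_rot_lt {σ : ℕ} {T : List ℕ} (hT : Wellformed σ T)
    (p : ℕ) : maxRepeatDepth T (rot T p) < T.length := by
  have hle : maxRepeatDepth T (rot T p) ≤ T.length :=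
    (Nat.findGreatest_le _).trans (length_rot T p).le
  refine lt_of_le_of_ne hle fun heq => ?_
  have hmem := take_maxRepeatDepth_mem T (rot T p)
  rw [heq, take_of_length_le (length_rot T p).le, Finset.mem_insert] at hmem
  rcases hmem with h | h
  · have := hT.length_pos
    rw [← length_rot T p, h] at this
    exact absurd this (lt_irrefl 0)
  · exact (hT.length_lt_of_rightMaximal (Finset.mem_filter.mp h).2.2.2.2).ne (length_rot T p)

theorem Wellformed.maxRepeatEdge_append_eq_take {σ : ℕ} {T : List ℕ} (hT : Wellformed σ T)
    (p : ℕ) : (maxRepeatEdge T (rot T p)).1 ++ [(maxRepeatEdge T (rot T p)).2] =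
      (rot T p).take (maxRepeatDepth T (rot T p) + 1) :=
  take_append_getD ((hT.maxRepeatDepth_rot_lt p).trans_eq (length_rot T p).symm)

theorem Wellformed.maxRepeatEdge_append_prefix_rot {σ : ℕ} {T : List ℕ} (hT : Wellformed σ T)
    (p : ℕ) : (maxRepeatEdge T (rot T p)).1 ++ [(maxRepeatEdge T (rot T p)).2] <+: rot T p :=
  hT.maxRepeatEdge_append_eq_take p ▸ take_prefix _ _

/-- The shortest right-maximal extension `Y` of the edge string occurs at `p`, so it is a
prefix of `rot T p` longer than `maxRepeatDepth`, hence not a maximal repeat. -/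
theorem Wellformed.not_mem_maxRepeats_of_maxRepeatEdge {σ : ℕ} {T : List ℕ}
    (hT : Wellformed σ T) {p : ℕ} (hp : p < T.length) {Y : List ℕ}
    (hY : ShortestRightMaxExt T
      ((maxRepeatEdge T (rot T p)).1 ++ [(maxRepeatEdge T (rot T p)).2]) Y) :
    Y ∉ MaxRepeats T := by
  intro hYM
  rw [hT.maxRepeatEdge_append_eq_take] at hY
  have hkn := hT.maxRepeatDepth_rot_lt p
  have hYn := hT.length_lt_of_rightMaximal hY.2.1
  have hYp : Y <+: rot T p := (circOccAt_iff_prefix_rot hp hYn.le).mp <| hY.circOccAt hp <|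
    (circOccAt_iff_prefix_rot hp (by rw [length_take, length_rot]; omega)).mpr (take_prefix _ _)
  have hle : Y.length ≤ maxRepeatDepth T (rot T p) :=
    Nat.le_findGreatest hYp.length_le (by
      rw [← prefix_iff_eq_take.mp hYp]; exact Finset.mem_insert_of_mem hYM)
  have := hY.1.length_le
  rw [length_take, length_rot] at this
  omega

theorem Wellformed.maxRepeatEdge_rot_mem_Fr {σ : ℕ} {T : List ℕ} (hT : Wellformed σ T)
    {p : ℕ} (hp : p < T.length) : maxRepeatEdge T (rot T p) ∈ Fr T := by
  have hX := hT.maxRepeatEdge_append_prefix_rot p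
  have hocc := (circOccAt_iff_prefix_rot hp (hX.length_le.trans (length_rot T p).le)).mpr hX
  refine Finset.mem_filter.mpr ⟨Finset.mem_product.mpr ⟨take_maxRepeatDepth_mem T _, ?_⟩,
    mem_SigmaR_of_circOccAt hp hocc,
    Or.inr fun _ hY => hT.not_mem_maxRepeats_of_maxRepeatEdge hp hY⟩
  exact mem_toFinset.mpr (mem_of_circOccAt_append_singleton (by omega) hocc)

theorem numRuns_append_singleton : ∀ (l : List ℕ) (c : ℕ),
    numRuns (l ++ [c]) = numRuns l + if l.getLast? = some c then 0 else 1
  | [], _ => by simp [numRuns]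
  | [a], c => by by_cases h : a = c <;> simp [numRuns, h]
  | a :: b :: l, c => by
    rw [cons_append, cons_append, numRuns, ← cons_append, numRuns_append_singleton (b :: l),
      numRuns, getLast?_cons_cons]
    omega

theorem numRuns_le_card {β : Type*} (l : List ℕ) (s : Finset β) (f : ℕ → β)
    (hf : ∀ i < l.length, f i ∈ s)
    (hinj : ∀ i j, i < j → j < l.length → f i = f j → l.getD (j - 1) 0 = l.getD j 0) :
    numRuns l ≤ s.card := by
  induction l using List.reverseRecOn generalizing s with
  | nil => simp [numRuns]
  | append_singleton l c ih =>
    rw [length_append, length_singleton] at hf hinj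
    have hgetD : ∀ i < l.length, (l ++ [c]).getD i 0 = l.getD i 0 := getD_append _ _ _
    have ih' : ∀ s' : Finset β, (∀ i < l.length, f i ∈ s') → numRuns l ≤ s'.card :=
      fun s' hs' => ih s' hs' fun i j hij hj h => by
        rw [← hgetD _ (by omega), ← hgetD _ hj]
        exact hinj i j hij (by omega) h
    rw [numRuns_append_singleton]
    split_ifs with hc
    · exact ih' s fun i hi => hf i (by omega)
    · have hfresh : ∀ i < l.length, f i ≠ f l.length := fun i hi h => hc <| by
        have := hinj i l.length hi (by omega) h
        rw [hgetD _ (by omega), getD_append_right _ _ _ _ le_rfl, Nat.sub_self,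
          getD_cons_zero, getD_eq_getElem _ _ (by omega)] at this
        rw [getLast?_eq_getElem?, getElem?_eq_getElem (by omega), this]
      have hmem := hf l.length (by omega)
      have := ih' (s.erase (f l.length)) fun i hi =>
        Finset.mem_erase.mpr ⟨hfresh i hi, hf i (by omega)⟩
      rw [Finset.card_erase_of_mem hmem] at this
      have := Finset.card_pos.mpr ⟨_, hmem⟩
      omega

def sortedRotations (T : List ℕ) : List (List ℕ) :=
  ((List.range T.length).map (rot T)).mergeSort lexLe

theorem length_sortedRotations (T : List ℕ) : (sortedRotations T).length = T.length := by
  simp [sortedRotations]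

theorem exists_getD_sortedRotations_eq_rot {T : List ℕ} {i : ℕ} (hi : i < T.length) :
    ∃ p < T.length, (sortedRotations T).getD i [] = rot T p := by
  have hmem : (sortedRotations T).getD i [] ∈ sortedRotations T := by
    rw [getD_eq_getElem _ _ (by rwa [length_sortedRotations])]
    exact getElem_mem _
  obtain ⟨p, hp, h⟩ := mem_map.mp ((mergeSort_perm _ _).mem_iff.mp hmem)
  exact ⟨p, mem_range.mp hp, h.symm⟩

theorem getD_sortedRotations_le {T : List ℕ} {i j : ℕ} (hij : i ≤ j) (hj : j < T.length) :
    (sortedRotations T).getD i [] ≤ (sortedRotations T).getD j [] := by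
  rcases hij.eq_or_lt with rfl | hij
  · exact le_rfl
  have hsorted : (sortedRotations T).Pairwise (fun A B => lexLe A B = true) :=
    pairwise_mergeSort
      (fun A B C h₁ h₂ => (lexLe_iff_le A C).mpr
        (((lexLe_iff_le A B).mp h₁).trans ((lexLe_iff_le B C).mp h₂)))
      (fun A B => by simpa only [Bool.or_eq_true, lexLe_iff_le] using le_total A B) _
  have hlen := length_sortedRotations T
  rw [getD_eq_getElem _ _ (by omega), getD_eq_getElem _ _ (by omega), ← lexLe_iff_le]
  exact pairwise_iff_getElem.mp hsorted i j (by omega) (by omega) hij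

theorem length_BWT (T : List ℕ) : (BWT T).length = T.length := by
  simp [BWT]

theorem getD_BWT {T : List ℕ} {i : ℕ} (hi : i < T.length) :
    (BWT T).getD i 0 = ((sortedRotations T).getD i []).getLast! := by
  have hlen := length_sortedRotations T
  rw [getD_eq_getElem _ _ (by rwa [length_BWT]), getD_eq_getElem _ _ (by omega)]
  simp [BWT, sortedRotations]

/-- Sorted rotations between two with the same edge also begin with the edge string, so
the BWT does not change across that interval. -/
theorem Wellformed.getD_BWT_pred_eq {σ : ℕ} {T : List ℕ} (hT : Wellformed σ T) {i j : ℕ}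
    (hij : i < j) (hj : j < T.length)
    (h : maxRepeatEdge T ((sortedRotations T).getD i []) =
      maxRepeatEdge T ((sortedRotations T).getD j [])) :
    (BWT T).getD (j - 1) 0 = (BWT T).getD j 0 := by
  obtain ⟨p, hp, hRi⟩ := exists_getD_sortedRotations_eq_rot (hij.trans hj)
  obtain ⟨q, hq, hRj'⟩ := exists_getD_sortedRotations_eq_rot (show j - 1 < T.length by omega)
  obtain ⟨r, hr, hRj⟩ := exists_getD_sortedRotations_eq_rot hj
  rw [hRi, hRj] at h
  have hXi := hT.maxRepeatEdge_append_prefix_rot p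
  have hXj := hT.maxRepeatEdge_append_prefix_rot r
  rw [h] at hXi
  have h₁ := getD_sortedRotations_le (T := T) (show i ≤ j - 1 by omega) (by omega)
  have h₂ := getD_sortedRotations_le (T := T) (show j - 1 ≤ j by omega) hj
  rw [hRi, hRj'] at h₁
  rw [hRj', hRj] at h₂
  rw [getD_BWT (by omega), getD_BWT hj, hRj', hRj]
  exact hT.getLast!_rot_eq_of_prefix (append_ne_nil_of_right_ne_nil _ (cons_ne_nil _ _))
    hq hr (hXi.of_le_of_le hXj h₁ h₂) hXj
    fun _ hY => hT.not_mem_maxRepeats_of_maxRepeatEdge hr hY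

/-- The number of runs of the Burrows–Wheeler transform of `T` is at
most the number of suffix-tree edges of `T` from maximal-repeat nodes to
non-maximal-repeat nodes: `r_T ≤ |ℱ^r_T|`. -/
theorem runs_le_Fr (σ : ℕ) (T : List ℕ) (hT : Wellformed σ T) :
    numRuns (BWT T) ≤ (Fr T).card := by
  refine numRuns_le_card (BWT T) (Fr T) (fun i => maxRepeatEdge T ((sortedRotations T).getD i []))
    (fun i hi => ?_) (fun i j hij hj h => hT.getD_BWT_pred_eq hij (length_BWT T ▸ hj) h)
  obtain ⟨p, hp, hrot⟩ := exists_getD_sortedRotations_eq_rot (length_BWT T ▸ hi)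
  exact hrot ▸ hT.maxRepeatEdge_rot_mem_Fr hp
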